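/- arXiv:1101.5908 — 4 statements merged into one kernel-verified Lean document; each statement's English description precedes it below -/
import Mathlib

section
/- Let H be a complex Hilbert space, A a star-subalgebra of the algebra of bounded operators on H, and T a densely defined self-adjoint unbounded operator on H such that: (i) T − i admits a bounded two-sided inverse R that is a compact operator; (ii) every a ∈ A maps dom T into dom T, and the commutator x ↦ T(a x) − a(T x), defined on dom T, extends to a bounded operator on H. Let M : H → H be a bounded self-adjoint operator. Then for the operator T + M with domain dom T: (1) T + M is self-adjoint; (2) T + M − i admits a bounded two-sided inverse that is a compact operator; (3) for every a ∈ A, the commutator x ↦ (T + M)(a x) − a((T + M)x), defined on dom T, extends to a bounded operator on H. (That is, perturbing the Dirac operator of a spectral triple by a bounded self-adjoint operator again yields a spectral triple.) -/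
/-!
Because `M` is bounded, `x ↦ ⟪y, (T + M) x⟫` is continuous exactly when `x ↦ ⟪y, T x⟫` is, so
`(T + M)† = T† + M† = T + M`.

For the resolvent, put `S = 1 + M R`. Then `S = (T + M - i) R` on `H` and `S (T - i) = T + M - i`
on `dom T`, so `R S⁻¹` inverts `T + M - i` as soon as `S` is invertible. Since `M R` is compact,
the Fredholm alternative reduces this to injectivity of `S`, and `S z = 0` forces `R z = 0`
because a symmetric operator satisfies `|Im μ| ‖x‖ ≤ ‖(T + M - μ) x‖`.

Commutators with `T + M` differ from those with `T` by the bounded operator `M a - a M`.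
-/

open scoped InnerProductSpace

variable {H : Type*} [NormedAddCommGroup H] [InnerProductSpace ℂ H] [CompleteSpace H]

/-- The sum `T + M` of an unbounded operator `T` and a bounded operator `M`,
with domain `dom T`, given by `x ↦ T x + M x`. -/
noncomputable def addBounded (T : H →ₗ.[ℂ] H) (M : H →L[ℂ] H) : H →ₗ.[ℂ] H where
  domain := T.domain
  toFun := T.toFun + (M : H →ₗ[ℂ] H).comp T.domain.subtype

theorem IsCompactOperator.isUnit_one_add {𝕜 X : Type*} [NontriviallyNormedField 𝕜]
    [NormedAddCommGroup X] [NormedSpace 𝕜 X] [CompleteSpace X] {K : X →L[𝕜] X}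
    (hK : IsCompactOperator K) (hinj : Function.Injective ⇑(1 + K)) : IsUnit (1 + K) := by
  rcases hK.hasEigenvalue_or_mem_resolventSet (neg_ne_zero.mpr one_ne_zero) with hev | hres
  · obtain ⟨v, hv⟩ := hev.exists_hasEigenvector
    have hKv : K v = -v := by simpa using hv.apply_eq_smul
    refine absurd (hinj ?_) hv.2
    simp [hKv]
  · rw [spectrum.mem_resolventSet_iff, map_neg, map_one, ← neg_add'] at hres
    simpa using hres.neg

section

variable {E : Type*} [NormedAddCommGroup E] [InnerProductSpace ℂ E]

theorem LinearPMap.IsFormalAdjoint.abs_im_mul_norm_le {S : E →ₗ.[ℂ] E}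
    (hS : S.IsFormalAdjoint S) (μ : ℂ) (x : S.domain) :
    |μ.im| * ‖(x : E)‖ ≤ ‖S x - μ • (x : E)‖ := by
  have hreal : (⟪S x, (x : E)⟫_ℂ).im = 0 :=
    Complex.conj_eq_iff_im.mp (by rw [inner_conj_symm]; exact (hS x x).symm)
  have him : (⟪S x - μ • (x : E), x⟫_ℂ).im = μ.im * ‖(x : E)‖ ^ 2 := by
    rw [inner_sub_left, inner_smul_left, inner_self_eq_norm_sq_to_K]
    simp [hreal, ← Complex.ofReal_pow]
  have hsq : |μ.im| * ‖(x : E)‖ ^ 2 ≤ ‖S x - μ • (x : E)‖ * ‖(x : E)‖ :=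
    calc |μ.im| * ‖(x : E)‖ ^ 2 = |(⟪S x - μ • (x : E), x⟫_ℂ).im| := by
          rw [him, abs_mul, abs_sq]
      _ ≤ ‖⟪S x - μ • (x : E), x⟫_ℂ‖ := Complex.abs_im_le_norm _
      _ ≤ ‖S x - μ • (x : E)‖ * ‖(x : E)‖ := norm_inner_le_norm _ _
  rcases (norm_nonneg (x : E)).eq_or_lt with hx | hx
  · simp [← hx]
  · rw [sq, ← mul_assoc] at hsq
    exact le_of_mul_le_mul_right hsq hx

theorem IsSelfAdjoint.isFormalAdjoint [CompleteSpace E] {S : E →ₗ.[ℂ] E} (hS : IsSelfAdjoint S) :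
    S.IsFormalAdjoint S := by
  have h := LinearPMap.adjoint_isFormalAdjoint hS.dense_domain
  rwa [LinearPMap.isSelfAdjoint_def.mp hS] at h

structure IsResolvent (T : E →ₗ.[ℂ] E) (μ : ℂ) (R : E →L[ℂ] E) : Prop where
  mem : ∀ y, R y ∈ T.domain
  right_inv : ∀ y, T ⟨R y, mem y⟩ - μ • R y = y
  left_inv : ∀ x : T.domain, R (T x - μ • (x : E)) = x

def HasBoundedCommutator (T : E →ₗ.[ℂ] E) (a : E →L[ℂ] E) : Prop :=
  ∃ hmap : ∀ x ∈ T.domain, a x ∈ T.domain,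
    ∃ B : E →L[ℂ] E, ∀ x : T.domain, B x = T ⟨a x, hmap x x.2⟩ - a (T x)

section

variable {T : E →ₗ.[ℂ] E} {M : E →L[ℂ] E}

@[simp]
theorem addBounded_apply (x : (addBounded T M).domain) : addBounded T M x = T x + M x := rfl

theorem adjoint_addBounded [CompleteSpace E] (hT : Dense (T.domain : Set E)) :
    (addBounded T M).adjoint = addBounded T.adjoint M.adjoint := by
  have hdom : (addBounded T M).adjoint.domain = T.adjoint.domain := by
    ext y
    have hM : Continuous fun x : T.domain => ⟪y, M x⟫_ℂ := by fun_prop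
    have hsplit : (fun x : T.domain => ⟪y, addBounded T M x⟫_ℂ) =
        (fun x : T.domain => ⟪y, T x⟫_ℂ) + fun x : T.domain => ⟪y, M x⟫_ℂ := by
      ext x
      exact inner_add_right _ _ _
    change Continuous (fun x : T.domain => ⟪y, addBounded T M x⟫_ℂ) ↔
      Continuous fun x : T.domain => ⟪y, T x⟫_ℂ
    rw [hsplit]
    exact ⟨fun h => by simpa using h.sub hM, fun h => h.add hM⟩
  refine LinearPMap.ext hdom fun y hy hy' => ?_
  refine LinearPMap.adjoint_apply_eq (T := addBounded T M) hT _ fun x => ?_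
  rw [addBounded_apply, addBounded_apply, inner_add_left, inner_add_right,
    ContinuousLinearMap.adjoint_inner_left]
  exact congrArg (· + _) (LinearPMap.adjoint_isFormalAdjoint hT ⟨y, hy'⟩ x)

theorem IsSelfAdjoint.addBounded [CompleteSpace E] (hT : IsSelfAdjoint T) (hM : IsSelfAdjoint M) :
    IsSelfAdjoint (addBounded T M) := by
  rw [LinearPMap.isSelfAdjoint_def, adjoint_addBounded hT.dense_domain, hM.adjoint_eq,
    LinearPMap.isSelfAdjoint_def.mp hT]

protected theorem HasBoundedCommutator.addBounded {a : E →L[ℂ] E}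
    (h : HasBoundedCommutator T a) (M : E →L[ℂ] E) : HasBoundedCommutator (addBounded T M) a := by
  obtain ⟨hmap, B, hB⟩ := h
  refine ⟨hmap, B + (M ∘L a - a ∘L M), fun (x : T.domain) => ?_⟩
  change B x + (M (a x) - a (M x)) = T ⟨a x, hmap x x.2⟩ + M (a x) - a (T x + M x)
  rw [hB, map_add]
  abel

namespace IsResolvent

variable {μ : ℂ} {R : E →L[ℂ] E}

theorem one_add_comp_apply (hR : IsResolvent T μ R) (y : E) :
    (1 + M ∘L R) y = addBounded T M ⟨R y, hR.mem y⟩ - μ • R y :=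
  calc (1 + M ∘L R) y = y + M (R y) := rfl
    _ = T ⟨R y, hR.mem y⟩ - μ • R y + M (R y) := by rw [hR.right_inv]
    _ = addBounded T M ⟨R y, hR.mem y⟩ - μ • R y := sub_add_eq_add_sub _ _ _

theorem one_add_comp_apply_sub_smul (hR : IsResolvent T μ R) (x : T.domain) :
    (1 + M ∘L R) (T x - μ • (x : E)) = addBounded T M x - μ • (x : E) :=
  calc (1 + M ∘L R) (T x - μ • (x : E)) = T x - μ • (x : E) + M (R (T x - μ • (x : E))) := rfl
    _ = T x - μ • (x : E) + M x := by rw [hR.left_inv]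
    _ = addBounded T M x - μ • (x : E) := sub_add_eq_add_sub _ _ _

protected theorem addBounded (hR : IsResolvent T μ R) (hS : IsUnit (1 + M ∘L R)) :
    IsResolvent (addBounded T M) μ (R ∘L Ring.inverse (1 + M ∘L R)) where
  mem y := hR.mem _
  right_inv y :=
    (hR.one_add_comp_apply _).symm.trans (DFunLike.congr_fun (Ring.mul_inverse_cancel _ hS) y)
  left_inv (x : T.domain) := by
    have h := DFunLike.congr_fun (Ring.inverse_mul_cancel _ hS) (T x - μ • (x : E))
    rw [mul_apply_eq_comp, hR.one_add_comp_apply_sub_smul, one_apply_eq_self] at h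
    exact (congrArg R h).trans (hR.left_inv x)

theorem injective_one_add_comp (hR : IsResolvent T μ R)
    (hTM : (addBounded T M).IsFormalAdjoint (addBounded T M)) (hμ : μ.im ≠ 0) :
    Function.Injective ⇑(1 + M ∘L R) := by
  refine (injective_iff_map_eq_zero _).mpr fun z hz => ?_
  have hRz : R z = 0 := by
    have h := hTM.abs_im_mul_norm_le μ ⟨R z, hR.mem z⟩
    rw [← hR.one_add_comp_apply, hz, norm_zero] at h
    exact norm_le_zero_iff.mp (nonpos_of_mul_nonpos_right h (abs_pos.mpr hμ))
  simpa [hRz] using hz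

theorem exists_isCompactOperator_addBounded [CompleteSpace E] (hR : IsResolvent T μ R)
    (hRc : IsCompactOperator R) (hTM : (addBounded T M).IsFormalAdjoint (addBounded T M))
    (hμ : μ.im ≠ 0) :
    ∃ RM : E →L[ℂ] E, IsResolvent (addBounded T M) μ RM ∧ IsCompactOperator RM :=
  ⟨_, hR.addBounded ((hRc.clm_comp M).isUnit_one_add (hR.injective_one_add_comp hTM hμ)),
    hRc.comp_clm _⟩

end IsResolvent

end

end

theorem statement3_general (A : StarSubalgebra ℂ (H →L[ℂ] H))
    (T : H →ₗ.[ℂ] H)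
    (hT : T.adjoint = T)
    (R : H →L[ℂ] H)
    (hRmem : ∀ y : H, R y ∈ T.domain)
    (hRright : ∀ y : H, T ⟨R y, hRmem y⟩ - Complex.I • R y = y)
    (hRleft : ∀ x : T.domain, R (T x - Complex.I • (x : H)) = (x : H))
    (hRcompact : IsCompactOperator (⇑R))
    (hA : ∀ a ∈ A, ∃ hmap : ∀ x ∈ T.domain, a x ∈ T.domain,
      ∃ B : H →L[ℂ] H, ∀ x : T.domain, B x = T ⟨a x, hmap x x.2⟩ - a (T x))
    (M : H →L[ℂ] H)
    (hM : ∀ x y : H, ⟪M x, y⟫_ℂ = ⟪x, M y⟫_ℂ) :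
    (addBounded T M).adjoint = addBounded T M ∧
    (∃ RM : H →L[ℂ] H, ∃ hRMmem : ∀ y : H, RM y ∈ (addBounded T M).domain,
      (∀ y : H, (addBounded T M) ⟨RM y, hRMmem y⟩ - Complex.I • RM y = y) ∧
      (∀ x : (addBounded T M).domain,
        RM ((addBounded T M) x - Complex.I • (x : H)) = (x : H)) ∧
      IsCompactOperator (⇑RM)) ∧
    (∀ a ∈ A, ∃ hmap : ∀ x ∈ (addBounded T M).domain, a x ∈ (addBounded T M).domain,
      ∃ B : H →L[ℂ] H, ∀ x : (addBounded T M).domain,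
        B x = (addBounded T M) ⟨a x, hmap x x.2⟩ - a ((addBounded T M) x)) := by
  have hTM : IsSelfAdjoint (addBounded T M) :=
    IsSelfAdjoint.addBounded hT (ContinuousLinearMap.isSelfAdjoint_iff_isSymmetric.mpr hM)
  obtain ⟨RM, ⟨hRMmem, hRMright, hRMleft⟩, hRMcompact⟩ :=
    (IsResolvent.mk hRmem hRright hRleft).exists_isCompactOperator_addBounded hRcompact
      hTM.isFormalAdjoint (by simp)
  exact ⟨hTM, ⟨RM, hRMmem, hRMright, hRMleft, hRMcompact⟩,
    fun a ha => HasBoundedCommutator.addBounded (hA a ha) M⟩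

/-- Perturbing the Dirac operator of a spectral triple by a bounded self-adjoint operator
again yields a spectral triple: if `(A, H, T)` satisfies (i) `T - i` has a bounded two-sided
inverse which is compact, and (ii) each `a ∈ A` preserves `dom T` with `[T, a]` bounded,
then for self-adjoint bounded `M`, the operator `T + M` (with domain `dom T`) is
(1) self-adjoint, (2) has compact resolvent at `i`, and (3) has bounded commutators with
all `a ∈ A`. -/
theorem statement3 (A : StarSubalgebra ℂ (H →L[ℂ] H))
    (T : H →ₗ.[ℂ] H)
    (hdense : Dense (T.domain : Set H))
    (hT : T.adjoint = T)
    (R : H →L[ℂ] H)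
    (hRmem : ∀ y : H, R y ∈ T.domain)
    (hRright : ∀ y : H, T ⟨R y, hRmem y⟩ - Complex.I • R y = y)
    (hRleft : ∀ x : T.domain, R (T x - Complex.I • (x : H)) = (x : H))
    (hRcompact : IsCompactOperator (⇑R))
    (hA : ∀ a ∈ A, ∃ hmap : ∀ x ∈ T.domain, a x ∈ T.domain,
      ∃ B : H →L[ℂ] H, ∀ x : T.domain, B x = T ⟨a x, hmap x x.2⟩ - a (T x))
    (M : H →L[ℂ] H)
    (hM : ∀ x y : H, ⟪M x, y⟫_ℂ = ⟪x, M y⟫_ℂ) :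
    (addBounded T M).adjoint = addBounded T M ∧
    (∃ RM : H →L[ℂ] H, ∃ hRMmem : ∀ y : H, RM y ∈ (addBounded T M).domain,
      (∀ y : H, (addBounded T M) ⟨RM y, hRMmem y⟩ - Complex.I • RM y = y) ∧
      (∀ x : (addBounded T M).domain,
        RM ((addBounded T M) x - Complex.I • (x : H)) = (x : H)) ∧
      IsCompactOperator (⇑RM)) ∧
    (∀ a ∈ A, ∃ hmap : ∀ x ∈ (addBounded T M).domain, a x ∈ (addBounded T M).domain,
      ∃ B : H →L[ℂ] H, ∀ x : (addBounded T M).domain,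
        B x = (addBounded T M) ⟨a x, hmap x x.2⟩ - a ((addBounded T M) x)) :=
  statement3_general A T hT R hRmem hRright hRleft hRcompact hA M hM
end

section
/- Let H be a complex Hilbert space, T a (possibly unbounded) linear operator on H with domain dom T, and M : H → H a bounded operator such that M maps dom T^k into dom T^k for every k ≥ 1, where dom T¹ = dom T and dom T^{k+1} = {x ∈ dom T : T x ∈ dom T^k}. Let T + M be the operator with domain dom T given by x ↦ T x + M x. Then dom (T + M)^k = dom T^k for every k ≥ 1; in particular ⋂_k dom (T + M)^k = ⋂_k dom T^k. -/
/-!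
Each `dom T^k` is a linear subspace, and for `x ∈ dom T^(k+1) ∪ dom (T + M)^(k+1)` the vector `M x`
lies in `dom T^k` (induction hypothesis plus invariance under `M`). Hence
`T x + M x ∈ dom T^k ↔ T x ∈ dom T^k`, which is the induction step from `k` to `k + 1`.
-/

variable {H : Type*} [NormedAddCommGroup H] [InnerProductSpace ℂ H] [CompleteSpace H]

/-- The domain of the `k`-th power of an unbounded operator `T`:
`dom T⁰ = H`, `dom T¹ = dom T` and `dom T^(k+1) = {x ∈ dom T : T x ∈ dom T^k}`. -/
def domPow (T : H →ₗ.[ℂ] H) : ℕ → Set H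
  | 0 => Set.univ
  | k + 1 => {x : H | ∃ hx : x ∈ T.domain, T ⟨x, hx⟩ ∈ domPow T k}

section

variable {E : Type*} [NormedAddCommGroup E] [InnerProductSpace ℂ E]

def domPowSubmodule (T : E →ₗ.[ℂ] E) : ℕ → Submodule ℂ E
  | 0 => ⊤
  | k + 1 => ((domPowSubmodule T k).comap T.toFun).map T.domain.subtype

theorem coe_domPowSubmodule (T : E →ₗ.[ℂ] E) :
    ∀ k, (domPowSubmodule T k : Set E) = domPow T k
  | 0 => Submodule.top_coe
  | k + 1 => by
    ext x
    simp [domPowSubmodule, domPow, ← coe_domPowSubmodule T k]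

theorem add_mem_domPow_iff_left (T : E →ₗ.[ℂ] E) {k : ℕ} {x y : E} (hy : y ∈ domPow T k) :
    x + y ∈ domPow T k ↔ x ∈ domPow T k := by
  rw [← coe_domPowSubmodule] at hy ⊢
  exact Submodule.add_mem_iff_left _ hy

theorem domPow_succ_subset (T : E →ₗ.[ℂ] E) : ∀ k, domPow T (k + 1) ⊆ domPow T k
  | 0 => fun x _ => Set.mem_univ x
  | k + 1 => fun _ ⟨hx, h⟩ => ⟨hx, domPow_succ_subset T k h⟩

theorem domPow_addBounded (T : E →ₗ.[ℂ] E) (M : E →L[ℂ] E)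
    (hM : ∀ k, Set.MapsTo M (domPow T k) (domPow T k)) :
    ∀ k, domPow (addBounded T M) k = domPow T k
  | 0 => rfl
  | k + 1 => by
    have ih := domPow_addBounded T M hM k
    ext x
    constructor
    · rintro ⟨hx, h⟩
      have hxk : x ∈ domPow T k := ih ▸ domPow_succ_subset _ k ⟨hx, h⟩
      rw [ih] at h
      exact ⟨hx, (add_mem_domPow_iff_left T (hM k hxk)).1 h⟩
    · rintro ⟨hx, h⟩
      have hxk : x ∈ domPow T k := domPow_succ_subset T k ⟨hx, h⟩
      exact ⟨hx, ih ▸ (add_mem_domPow_iff_left T (hM k hxk)).2 h⟩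

end

/-- If the bounded operator `M` maps `dom T^k` into `dom T^k` for every `k ≥ 1`, then
`dom (T + M)^k = dom T^k` for every `k ≥ 1` (where `T + M` has domain `dom T`); in
particular `⋂ k, dom (T + M)^k = ⋂ k, dom T^k`. -/
theorem statement4 (T : H →ₗ.[ℂ] H) (M : H →L[ℂ] H)
    (hmap : ∀ k : ℕ, 1 ≤ k → ∀ x ∈ domPow T k, M x ∈ domPow T k) :
    (∀ k : ℕ, 1 ≤ k → domPow (addBounded T M) k = domPow T k) ∧
      (⋂ k : ℕ, domPow (addBounded T M) k) = ⋂ k : ℕ, domPow T k := by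
  have hM : ∀ k, Set.MapsTo M (domPow T k) (domPow T k)
    | 0 => Set.mapsTo_univ _ _
    | k + 1 => hmap (k + 1) k.succ_pos
  exact ⟨fun k _ => domPow_addBounded T M hM k, Set.iInter_congr (domPow_addBounded T M hM)⟩
end

section
/- For every natural number p ≥ 1 and every real number μ ≥ 1, one has μ^{-p/2} − (μ + 1)^{-p/2} ≤ ((2^p − 1)/2) · μ^{-(p+2)/2}, where x^{r} denotes the real power of a positive real number x by a real exponent r. -/
/-! Writing `μ + 1 = μ (1 + 1/μ)`, the tangent-line bound `(1 + x) ^ (-q) ≥ 1 - q x` (from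
`exp y ≥ 1 + y` and `log (1 + x) ≤ x`) shows that `t ↦ t ^ (-q)` drops by at most `q μ ^ (-q - 1)`
over `[μ, μ + 1]`; with `q = p / 2` it remains to note `p ≤ 2 ^ p - 1`. -/

namespace Real

theorem one_sub_mul_le_one_add_rpow_neg {q x : ℝ} (hq : 0 ≤ q) (hx : -1 < x) :
    1 - q * x ≤ (1 + x) ^ (-q) := by
  have hx' : 0 < 1 + x := by linarith
  have hlog : log (1 + x) ≤ x := by linarith [log_le_sub_one_of_pos hx']
  calc 1 - q * x ≤ -q * log (1 + x) + 1 := by nlinarith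
    _ ≤ exp (log (1 + x) * -q) := by rw [mul_comm]; exact add_one_le_exp _
    _ = (1 + x) ^ (-q) := (rpow_def_of_pos hx' _).symm

theorem rpow_neg_sub_rpow_neg_add_le {q μ h : ℝ} (hq : 0 ≤ q) (hμ : 0 < μ) (hμh : 0 < μ + h) :
    μ ^ (-q) - (μ + h) ^ (-q) ≤ q * h * μ ^ (-(q + 1)) := by
  have hsplit : μ + h = μ * (1 + h / μ) := by field_simp
  have hx : -1 < h / μ := by rw [lt_div_iff₀ hμ]; linarith
  have htangent := one_sub_mul_le_one_add_rpow_neg hq hx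
  have hμq : μ ^ (-(q + 1)) = μ ^ (-q) / μ := by
    rw [neg_add, rpow_add hμ, rpow_neg_one, div_eq_mul_inv]
  rw [hsplit, mul_rpow hμ.le (by linarith), hμq]
  have := mul_le_mul_of_nonneg_left htangent (rpow_pos_of_pos hμ (-q)).le
  calc μ ^ (-q) - μ ^ (-q) * (1 + h / μ) ^ (-q) ≤ μ ^ (-q) * (q * (h / μ)) := by linarith
    _ = q * h * (μ ^ (-q) / μ) := by ring

end Real

theorem statement6_general (p : ℕ) (μ : ℝ) (hμ : 1 ≤ μ) :
    μ ^ (-(p : ℝ) / 2) - (μ + 1) ^ (-(p : ℝ) / 2) ≤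
      ((2 ^ p - 1 : ℝ) / 2) * μ ^ (-((p : ℝ) + 2) / 2) := by
  have hμ0 : 0 < μ := by linarith
  have hcoef : (p : ℝ) / 2 ≤ (2 ^ p - 1 : ℝ) / 2 := by
    have : (p : ℝ) + 1 ≤ 2 ^ p := by exact_mod_cast Nat.lt_two_pow_self
    linarith
  have hexp : -((p : ℝ) + 2) / 2 = -((p : ℝ) / 2 + 1) := by ring
  rw [neg_div, hexp]
  calc μ ^ (-((p : ℝ) / 2)) - (μ + 1) ^ (-((p : ℝ) / 2))
      ≤ (p : ℝ) / 2 * 1 * μ ^ (-((p : ℝ) / 2 + 1)) :=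
        Real.rpow_neg_sub_rpow_neg_add_le (by positivity) hμ0 (by linarith)
    _ ≤ (2 ^ p - 1 : ℝ) / 2 * μ ^ (-((p : ℝ) / 2 + 1)) := by
        rw [mul_one]; gcongr

/-- For every natural number `p ≥ 1` and every real `μ ≥ 1`,
`μ^(-p/2) - (μ+1)^(-p/2) ≤ ((2^p - 1)/2) · μ^(-(p+2)/2)`,
where `^` denotes the real power `Real.rpow`. -/
theorem statement6 (p : ℕ) (hp : 1 ≤ p) (μ : ℝ) (hμ : 1 ≤ μ) :
    μ ^ (-(p : ℝ) / 2) - (μ + 1) ^ (-(p : ℝ) / 2) ≤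
      ((2 ^ p - 1 : ℝ) / 2) * μ ^ (-((p : ℝ) + 2) / 2) :=
  statement6_general p μ hμ
end

section
/- Let p ≥ 1 be a natural number and μ : ℕ → ℝ a sequence with μ_k ≥ 0 for all k, and suppose there exist a constant c > 0 and N ∈ ℕ such that μ_k ≥ c · k^{2/p} for all k ≥ N. Then the sequence k ↦ μ_k^{-p/2} − (μ_k + 1)^{-p/2} is absolutely summable, i.e., ∑_k |μ_k^{-p/2} − (μ_k + 1)^{-p/2}| < ∞, where real powers x^{r} for r < 0 are taken with the convention 0^{r} = 0. -/
/-!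
By the mean value theorem, `x ^ (-s) - (x + 1) ^ (-s) ≤ s * x ^ (-(s + 1))` for `x > 0`, so with
`s = p / 2` the terms are eventually bounded by a multiple of `μ k ^ (-(p / 2 + 1))`, which the growth
hypothesis bounds by a multiple of `k ^ (-(1 + 2 / p))`, a summable sequence.
-/

open Real Filter

theorem abs_rpow_neg_sub_rpow_neg_add_one_le {s x : ℝ} (hs : 0 ≤ s) (hx : 0 < x) :
    |x ^ (-s) - (x + 1) ^ (-s)| ≤ s * x ^ (-(s + 1)) := by
  have hderiv (t : ℝ) (ht : 0 < t) : HasDerivAt (fun t : ℝ ↦ t ^ (-s)) (-s * t ^ (-s - 1)) t :=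
    hasDerivAt_rpow_const (.inl ht.ne')
  obtain ⟨y, ⟨hxy, -⟩, hy⟩ := exists_hasDerivAt_eq_slope _ _ (lt_add_one x)
    (fun t ht ↦ (hderiv t (hx.trans_le ht.1)).continuousAt.continuousWithinAt)
    (fun t ht ↦ hderiv t (hx.trans ht.1))
  have hmvt : x ^ (-s) - (x + 1) ^ (-s) = s * y ^ (-(s + 1)) := by
    rw [add_sub_cancel_left, div_one] at hy
    rw [neg_add']
    linarith
  rw [hmvt, abs_of_nonneg (mul_nonneg hs (rpow_nonneg (hx.trans hxy).le _))]
  exact mul_le_mul_of_nonneg_left (rpow_le_rpow_of_nonpos hx hxy.le (by linarith)) hs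

theorem eventually_pos_of_le_mul_rpow {μ : ℕ → ℝ} {a c : ℝ} (hc : 0 < c)
    (hμ : ∀ᶠ k : ℕ in atTop, c * (k : ℝ) ^ a ≤ μ k) : ∀ᶠ k in atTop, 0 < μ k := by
  filter_upwards [hμ, eventually_ge_atTop 1] with k hk hk1
  have hk0 : (0 : ℝ) < k := by exact_mod_cast hk1
  exact lt_of_lt_of_le (by positivity) hk

theorem summable_rpow_neg_of_le_mul_rpow {μ : ℕ → ℝ} {a b c : ℝ} (hc : 0 < c) (hb : 0 ≤ b)
    (hab : 1 < a * b) (hμ : ∀ᶠ k : ℕ in atTop, c * (k : ℝ) ^ a ≤ μ k) :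
    Summable fun k ↦ μ k ^ (-b) := by
  have hsum : Summable fun k : ℕ ↦ c ^ (-b) * (k : ℝ) ^ (-(a * b)) :=
    (summable_nat_rpow.2 (by linarith)).mul_left _
  refine hsum.of_norm_bounded_eventually_nat ?_
  filter_upwards [hμ, eventually_ge_atTop 1] with k hk hk1
  have hk0 : (0 : ℝ) < k := by exact_mod_cast hk1
  have hμk : 0 < μ k := lt_of_lt_of_le (by positivity) hk
  calc ‖μ k ^ (-b)‖ = μ k ^ (-b) := norm_of_nonneg (by positivity)
    _ ≤ (c * (k : ℝ) ^ a) ^ (-b) := rpow_le_rpow_of_nonpos (by positivity) hk (by linarith)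
    _ = c ^ (-b) * (k : ℝ) ^ (-(a * b)) := by
      rw [mul_rpow hc.le (by positivity), ← rpow_mul hk0.le, mul_neg]

theorem statement7_general (p : ℕ) (hp : 1 ≤ p) (μ : ℕ → ℝ)
    (hgrow : ∃ c : ℝ, 0 < c ∧ ∃ N : ℕ, ∀ k : ℕ, N ≤ k → c * (k : ℝ) ^ (2 / (p : ℝ)) ≤ μ k) :
    Summable (fun k : ℕ => |μ k ^ (-(p : ℝ) / 2) - (μ k + 1) ^ (-(p : ℝ) / 2)|) := by
  obtain ⟨c, hc, N, hN⟩ := hgrow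
  have hgrow : ∀ᶠ k : ℕ in atTop, c * (k : ℝ) ^ (2 / (p : ℝ)) ≤ μ k := eventually_atTop.2 ⟨N, hN⟩
  have hp0 : (0 : ℝ) < p := by exact_mod_cast hp
  have hexp : 1 < 2 / (p : ℝ) * ((p : ℝ) / 2 + 1) := by
    have : 2 / (p : ℝ) * ((p : ℝ) / 2 + 1) = 1 + 2 / p := by field_simp
    rw [this]
    linarith [show 0 < 2 / (p : ℝ) by positivity]
  have hsum :=
    (summable_rpow_neg_of_le_mul_rpow hc (by positivity) hexp hgrow).mul_left ((p : ℝ) / 2)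
  refine hsum.of_norm_bounded_eventually_nat ?_
  filter_upwards [eventually_pos_of_le_mul_rpow hc hgrow] with k hk
  rw [Real.norm_eq_abs, abs_abs, neg_div]
  exact abs_rpow_neg_sub_rpow_neg_add_one_le (by positivity) hk

/-- If `p ≥ 1` and `(μ_k)` is a nonnegative sequence with `μ_k ≥ c·k^(2/p)` for some
`c > 0` and all sufficiently large `k`, then the sequence
`k ↦ μ_k^(-p/2) - (μ_k + 1)^(-p/2)` is absolutely summable. Here `^` is the real power
`Real.rpow`, with the convention `0 ^ r = 0` for `r < 0`. -/
theorem statement7 (p : ℕ) (hp : 1 ≤ p) (μ : ℕ → ℝ) (hμ : ∀ k, 0 ≤ μ k)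
    (hgrow : ∃ c : ℝ, 0 < c ∧ ∃ N : ℕ, ∀ k : ℕ, N ≤ k → c * (k : ℝ) ^ (2 / (p : ℝ)) ≤ μ k) :
    Summable (fun k : ℕ => |μ k ^ (-(p : ℝ) / 2) - (μ k + 1) ^ (-(p : ℝ) / 2)|) :=
  statement7_general p hp μ hgrow
end
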